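/- arXiv:2206.04347 — 4 statements merged into one kernel-verified Lean document; each statement's English description precedes it below -/
import Mathlib

section
/- Let P be a finite connected poset and let I, J be subsets of P with I ◎ P and J ◎ P. Then I = J or I ∩ J = ∅. -/
open scoped Classical

/-- A finite poset on a subset (`carrier`) of an ambient type `α`. -/
structure FinPoset (α : Type*) where
  carrier : Finset α
  le : α → α → Prop
  mem_of_le : ∀ ⦃x y⦄, le x y → x ∈ carrier ∧ y ∈ carrier
  le_refl : ∀ x ∈ carrier, le x x
  le_trans : ∀ ⦃x y z⦄, le x y → le y z → le x z
  le_antisymm : ∀ ⦃x y⦄, le x y → le y x → x = y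

namespace FinPoset

variable {α : Type*} [DecidableEq α]

/-- The strict order `x <_P y`. -/
def lt (P : FinPoset α) (x y : α) : Prop := P.le x y ∧ x ≠ y

/-- `min(P)`: the set of minimal elements of `P`. -/
noncomputable def minSet (P : FinPoset α) : Finset α :=
  P.carrier.filter (fun x => ∀ y, P.le y x → y = x)

/-- Connectivity of a subset `S`, for the graph with edges between comparable pairs. -/
def ConnOn (P : FinPoset α) (S : Set α) : Prop :=
  ∀ x ∈ S, ∀ y ∈ S,
    Relation.ReflTransGen (fun a b => a ∈ S ∧ b ∈ S ∧ (P.le a b ∨ P.le b a)) x y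

/-- A finite poset is connected if it is nonempty and any two elements are linked by a
chain of comparable pairs. -/
def Connected (P : FinPoset α) : Prop :=
  P.carrier.Nonempty ∧ P.ConnOn ↑P.carrier

/-- `I` is a connected component of `S` (for the comparability graph of `P`). -/
def IsCC (P : FinPoset α) (S I : Set α) : Prop :=
  I.Nonempty ∧ I ⊆ S ∧ P.ConnOn I ∧
    ∀ x ∈ I, ∀ y ∈ S, (P.le x y ∨ P.le y x) → y ∈ I

/-- `I_- = {x ∈ P \ I : ∃ y ∈ I, x ≤_P y}`. -/
noncomputable def below (P : FinPoset α) (I : Finset α) : Finset α :=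
  (P.carrier \ I).filter (fun x => ∃ y ∈ I, P.le x y)

/-- `I ◎ P` : `I_-` is a singleton `{w}` with `w ∈ min(P)`, and `I` is a connected
component of `{x ∈ P : w <_P x}`. -/
def Circ (P : FinPoset α) (I : Finset α) : Prop :=
  ∃ w, P.below I = {w} ∧ w ∈ P.minSet ∧
    P.IsCC {x | x ∈ P.carrier ∧ P.lt w x} ↑I

/-- The induced poset on a subset `S`. -/
def restrict (P : FinPoset α) (S : Finset α) : FinPoset α where
  carrier := P.carrier ∩ S
  le x y := P.le x y ∧ x ∈ S ∧ y ∈ S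
  mem_of_le := by
    intro x y h
    rcases P.mem_of_le h.1 with ⟨hx, hy⟩
    exact ⟨Finset.mem_inter.2 ⟨hx, h.2.1⟩, Finset.mem_inter.2 ⟨hy, h.2.2⟩⟩
  le_refl := by
    intro x hx
    rcases Finset.mem_inter.1 hx with ⟨h1, h2⟩
    exact ⟨P.le_refl x h1, h2, h2⟩
  le_trans := by
    rintro x y z ⟨h1, hx, hy⟩ ⟨h2, _, hz⟩
    exact ⟨P.le_trans h1 h2, hx, hz⟩
  le_antisymm := by
    rintro x y ⟨h1, _, _⟩ ⟨h2, _, _⟩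
    exact P.le_antisymm h1 h2

/-- The grafting `P ↘_v Q` of `P` above the vertex `v` of `Q` (auxiliary version, with
the disjointness hypotheses as arguments). -/
def graftAux (P Q : FinPoset α) (v : α) (hd : Disjoint P.carrier Q.carrier)
    (hv : v ∈ Q.carrier) : FinPoset α where
  carrier := P.carrier ∪ Q.carrier
  le x y := P.le x y ∨ Q.le x y ∨ (Q.le x v ∧ y ∈ P.carrier)
  mem_of_le := by
    rintro x y (h | h | ⟨h1, h2⟩)
    · rcases P.mem_of_le h with ⟨hx, hy⟩
      exact ⟨Finset.mem_union_left _ hx, Finset.mem_union_left _ hy⟩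
    · rcases Q.mem_of_le h with ⟨hx, hy⟩
      exact ⟨Finset.mem_union_right _ hx, Finset.mem_union_right _ hy⟩
    · exact ⟨Finset.mem_union_right _ (Q.mem_of_le h1).1, Finset.mem_union_left _ h2⟩
  le_refl := by
    intro x hx
    rcases Finset.mem_union.1 hx with h | h
    · exact Or.inl (P.le_refl x h)
    · exact Or.inr (Or.inl (Q.le_refl x h))
  le_trans := by
    rintro x y z (h1 | h1 | ⟨h1, h1'⟩) (h2 | h2 | ⟨h2, h2'⟩)
    · exact Or.inl (P.le_trans h1 h2)
    · exact absurd (Q.mem_of_le h2).1 (Finset.disjoint_left.1 hd (P.mem_of_le h1).2)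
    · exact absurd (Q.mem_of_le h2).1 (Finset.disjoint_left.1 hd (P.mem_of_le h1).2)
    · exact absurd (P.mem_of_le h2).1 (Finset.disjoint_right.1 hd (Q.mem_of_le h1).2)
    · exact Or.inr (Or.inl (Q.le_trans h1 h2))
    · exact Or.inr (Or.inr ⟨Q.le_trans h1 h2, h2'⟩)
    · exact Or.inr (Or.inr ⟨h1, (P.mem_of_le h2).2⟩)
    · exact absurd (Q.mem_of_le h2).1 (Finset.disjoint_left.1 hd h1')
    · exact absurd (Q.mem_of_le h2).1 (Finset.disjoint_left.1 hd h1')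
  le_antisymm := by
    rintro x y (h1 | h1 | ⟨h1, h1'⟩) (h2 | h2 | ⟨h2, h2'⟩)
    · exact P.le_antisymm h1 h2
    · exact absurd (Q.mem_of_le h2).1 (Finset.disjoint_left.1 hd (P.mem_of_le h1).2)
    · exact absurd (Q.mem_of_le h2).1 (Finset.disjoint_left.1 hd (P.mem_of_le h1).2)
    · exact absurd (P.mem_of_le h2).1 (Finset.disjoint_right.1 hd (Q.mem_of_le h1).2)
    · exact Q.le_antisymm h1 h2
    · exact absurd (Q.mem_of_le h1).1 (Finset.disjoint_left.1 hd h2')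
    · exact absurd (P.mem_of_le h2).2 (Finset.disjoint_right.1 hd (Q.mem_of_le h1).1)
    · exact absurd (Q.mem_of_le h2).1 (Finset.disjoint_left.1 hd h1')
    · exact absurd (Q.mem_of_le h1).1 (Finset.disjoint_left.1 hd h2')
  
/-- The grafting `P ↘_v Q` of `P` above the vertex `v` of `Q`: the poset on
`X₁ ⊔ X₂` restricting to `P` on `X₁` and to `Q` on `X₂`, with `q ≤ p` for `q ∈ X₂`,
`p ∈ X₁` iff `q ≤_Q v`.  (Junk value when the carriers are not disjoint or `v ∉ Q`.) -/
noncomputable def graft (P Q : FinPoset α) (v : α) : FinPoset α :=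
  if h : Disjoint P.carrier Q.carrier ∧ v ∈ Q.carrier then P.graftAux Q v h.1 h.2 else P

/-- The set of subsets `I` of the carrier with `I ◎ P`. -/
noncomputable def circSet (P : FinPoset α) : Finset (Finset α) :=
  P.carrier.powerset.filter (fun I => P.Circ I)

/-- Order isomorphisms from `A` to `B`, encoded as maps `α → α` that are the identity
outside of the carrier of `A`. -/
def Isos (A B : FinPoset α) : Set (α → α) :=
  {f | Set.BijOn f ↑A.carrier ↑B.carrier ∧
    (∀ x ∈ A.carrier, ∀ y ∈ A.carrier, (A.le x y ↔ B.le (f x) (f y))) ∧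
    ∀ x, x ∉ A.carrier → f x = x}

/-- `⟨A, B⟩`: the number of order isomorphisms from `A` to `B`. -/
noncomputable def pairing (A B : FinPoset α) : ℕ := Nat.card ↥(Isos A B)

/-- The NAP coproduct `δ(P) = (1/|min(P)|) Σ_{I ◎ P} I ⊗ (P \ I)`, with values in the
rational vector space spanned by pairs of finite posets. -/
noncomputable def delta (P : FinPoset α) : (FinPoset α × FinPoset α) →₀ ℚ :=
  ((P.minSet.card : ℚ))⁻¹ • ∑ I ∈ P.circSet,
    Finsupp.single (P.restrict I, P.restrict (P.carrier \ I)) (1 : ℚ)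

end FinPoset

/-- If `P` is a finite connected poset and `I ◎ P`, `J ◎ P`, then
`I = J` or `I ∩ J = ∅`. -/
theorem circ_eq_or_disjoint {α : Type*} [DecidableEq α] (P : FinPoset α)
    (hP : P.Connected) (I J : Finset α) (hI : I ⊆ P.carrier) (hJ : J ⊆ P.carrier)
    (hIc : P.Circ I) (hJc : P.Circ J) :
    I = J ∨ I ∩ J = ∅ := by
  rcases eq_or_ne (I ∩ J) ∅ with h | h
  · exact Or.inr h
  left
  obtain ⟨x, hx⟩ := Finset.nonempty_iff_ne_empty.2 h
  rw [Finset.mem_inter] at hx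
  obtain ⟨w, hwI, hwmin, hIcc⟩ := hIc
  obtain ⟨v, hvJ, hvmin, hJcc⟩ := hJc
  -- v = w
  have hvcar : v ∈ P.carrier := (Finset.mem_filter.1 hvmin).1
  have hvmin' : ∀ y, P.le y v → y = v := (Finset.mem_filter.1 hvmin).2
  have hwcar : w ∈ P.carrier := (Finset.mem_filter.1 hwmin).1
  have hwmin' : ∀ y, P.le y w → y = w := (Finset.mem_filter.1 hwmin).2
  have hxJ : x ∈ ({y | y ∈ P.carrier ∧ P.lt v y} : Set α) := hJcc.2.1 hx.2
  have hvx : P.le v x := hxJ.2.1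
  have hvnI : v ∉ I := by
    intro hvI
    have : P.lt w v := (hIcc.2.1 hvI).2
    exact this.2 (hvmin' w this.1)
  have hvw : v = w := by
    have : v ∈ P.below I := by
      simp only [FinPoset.below, Finset.mem_filter, Finset.mem_sdiff]
      exact ⟨⟨hvcar, hvnI⟩, x, hx.1, hvx⟩
    rw [hwI, Finset.mem_singleton] at this
    exact this
  subst hvw
  -- I and J are CCs of the same set containing x
  set S : Set α := {y | y ∈ P.carrier ∧ P.lt v y}
  have key : ∀ (A B : Finset α), P.IsCC S ↑A → P.IsCC S ↑B → x ∈ A → x ∈ B → B ⊆ A := by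
    intro A B hA hB hxA hxB
    intro b hb
    have := hB.2.2.1 x hxB b hb
    clear hb
    induction this with
    | refl => exact hxA
    | tail _ hstep ih =>
      exact hA.2.2.2 _ ih _ (hB.2.1 hstep.2.1) hstep.2.2
  exact Finset.Subset.antisymm (key J I hJcc hIcc hx.2 hx.1) (key I J hIcc hJcc hx.1 hx.2)
end

section
/- Let P be a finite connected poset and let I be a subset of P with I ◎ P. Then the induced poset on P \ I is connected. -/
open scoped Classical

/-! Let `w` be the unique element of `I_-`. Collapsing `I` onto `w` retracts `P` onto `P \ I`,
and this retraction sends comparable pairs to equal or comparable pairs: every element of `I`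
lies above `w`, and `w` is the only element outside `I` below an element of `I`. Hence it carries
paths of `P` to paths of `P \ I`. -/

namespace FinPoset

variable {α : Type*} (P : FinPoset α)

def CompAdj (S : Set α) (a b : α) : Prop :=
  a ∈ S ∧ b ∈ S ∧ (P.le a b ∨ P.le b a)

theorem compAdj_symm {P : FinPoset α} {S : Set α} {a b : α} (h : P.CompAdj S a b) :
    P.CompAdj S b a :=
  ⟨h.2.1, h.1, h.2.2.symm⟩

theorem connOn_iff {S : Set α} :
    P.ConnOn S ↔ ∀ x ∈ S, ∀ y ∈ S, Relation.ReflTransGen (P.CompAdj S) x y :=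
  Iff.rfl

theorem restrict_carrier [DecidableEq α] (S : Finset α) :
    (P.restrict S).carrier = P.carrier ∩ S :=
  rfl

theorem connOn_restrict_iff [DecidableEq α] {S : Finset α} {T : Set α} (hT : T ⊆ S) :
    (P.restrict S).ConnOn T ↔ P.ConnOn T := by
  have hadj : (P.restrict S).CompAdj T = P.CompAdj T := by
    ext a b
    simp only [CompAdj, restrict]
    constructor
    · rintro ⟨ha, hb, ⟨hab, -⟩ | ⟨hba, -⟩⟩
      exacts [⟨ha, hb, .inl hab⟩, ⟨ha, hb, .inr hba⟩]
    · rintro ⟨ha, hb, hab | hba⟩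
      exacts [⟨ha, hb, .inl ⟨hab, hT ha, hT hb⟩⟩, ⟨ha, hb, .inr ⟨hba, hT hb, hT ha⟩⟩]
  rw [connOn_iff, connOn_iff, hadj]

theorem ConnOn.diff {P : FinPoset α} {S I : Set α} {w : α} (hS : P.ConnOn S) (hw : w ∈ S \ I)
    (hw_le : ∀ y ∈ I, P.le w y) (h_below : ∀ x ∈ S \ I, ∀ y ∈ I, P.le x y → x = w) :
    P.ConnOn (S \ I) := by
  let f : α → α := fun a => if a ∈ I then w else a
  have hle : ∀ a ∈ S, ∀ b ∈ S, P.le a b → f a = f b ∨ P.CompAdj (S \ I) (f a) (f b) := by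
    intro a ha b hb hab
    by_cases haI : a ∈ I <;> by_cases hbI : b ∈ I
    · exact .inl (by simp only [f, if_pos haI, if_pos hbI])
    · simp only [f, if_pos haI, if_neg hbI]
      exact .inr ⟨hw, ⟨hb, hbI⟩, .inl (P.le_trans (hw_le a haI) hab)⟩
    · simp only [f, if_neg haI, if_pos hbI]
      exact .inl (h_below a ⟨ha, haI⟩ b hbI hab)
    · simp only [f, if_neg haI, if_neg hbI]
      exact .inr ⟨⟨ha, haI⟩, ⟨hb, hbI⟩, .inl hab⟩
  have hstep : ∀ a b, P.CompAdj S a b →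
      Relation.ReflTransGen (P.CompAdj (S \ I)) (f a) (f b) := by
    rintro a b ⟨ha, hb, hab | hba⟩
    · rcases hle a ha b hb hab with h | h
      exacts [h ▸ .refl, .single h]
    · rcases hle b hb a ha hba with h | h
      exacts [h ▸ .refl, .single (compAdj_symm h)]
  intro x hx y hy
  have hpath := (hS x hx.1 y hy.1).lift' f hstep
  simp only [Function.onFun, f, if_neg hx.2, if_neg hy.2] at hpath
  exact hpath

theorem Circ.exists_below [DecidableEq α] {P : FinPoset α} {I : Finset α} (hIc : P.Circ I) :
    ∃ w ∈ (P.carrier : Set α) \ I, (∀ y ∈ (I : Set α), P.le w y) ∧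
      ∀ x ∈ (P.carrier : Set α) \ I, ∀ y ∈ (I : Set α), P.le x y → x = w := by
  obtain ⟨w, hbelow, -, -, hI_sub, -⟩ := hIc
  have hw : w ∈ P.below I := hbelow ▸ Finset.mem_singleton_self w
  simp only [below, Finset.mem_filter, Finset.mem_sdiff] at hw
  refine ⟨w, hw.1, fun y hy => (hI_sub hy).2.1, fun x hx y hy hxy => ?_⟩
  have hx_below : x ∈ P.below I := Finset.mem_filter.2 ⟨Finset.mem_sdiff.2 hx, y, hy, hxy⟩
  simpa [hbelow] using hx_below

end FinPoset

theorem connected_sdiff_of_circ_general {α : Type*} [DecidableEq α] (P : FinPoset α)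
    (hP : P.Connected) (I : Finset α) (hIc : P.Circ I) :
    (P.restrict (P.carrier \ I)).Connected := by
  obtain ⟨w, hw, hw_le, h_below⟩ := hIc.exists_below
  have hcarrier : (P.restrict (P.carrier \ I)).carrier = P.carrier \ I := by
    rw [FinPoset.restrict_carrier, Finset.inter_eq_right.2 Finset.sdiff_subset]
  refine ⟨⟨w, by rw [hcarrier]; exact Finset.mem_sdiff.2 hw⟩, ?_⟩
  rw [hcarrier, FinPoset.connOn_restrict_iff P subset_rfl, Finset.coe_sdiff]
  exact hP.2.diff hw hw_le h_below

/-- If `P` is a finite connected poset and `I ◎ P`, then the induced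
poset on `P \ I` is connected. -/
theorem connected_sdiff_of_circ {α : Type*} [DecidableEq α] (P : FinPoset α)
    (hP : P.Connected) (I : Finset α) (hI : I ⊆ P.carrier) (hIc : P.Circ I) :
    (P.restrict (P.carrier \ I)).Connected :=
  connected_sdiff_of_circ_general P hP I hIc
end

section
/- Let P, Q, R be finite connected posets on pairwise disjoint finite sets. Then P ▷ (Q ▷ R) = Q ▷ (P ▷ R) in the ℚ-vector space with basis the posets on the union of the three ground sets; equivalently, the formal sum Σ_{u,v ∈ min(R)} P ↘_u (Q ↘_v R) equals the formal sum Σ_{u,v ∈ min(R)} Q ↘_u (P ↘_v R). (This is the left non-associative permutative (NAP) identity for the product ▷.) -/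
open scoped Classical

theorem FinPoset.ext' {α : Type*} {P Q : FinPoset α}
    (hc : P.carrier = Q.carrier) (hl : P.le = Q.le) : P = Q := by
  cases P; cases Q
  simp_all

theorem FinPoset.graft_swap {α : Type*} [DecidableEq α] (P Q R : FinPoset α)
    (hPQ : Disjoint P.carrier Q.carrier) (hPR : Disjoint P.carrier R.carrier)
    (hQR : Disjoint Q.carrier R.carrier) {u v : α}
    (hu : u ∈ R.carrier) (hv : v ∈ R.carrier) :
    FinPoset.graft P (FinPoset.graft Q R v) u
      = FinPoset.graft Q (FinPoset.graft P R u) v := by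
  have h1 : Disjoint Q.carrier R.carrier ∧ v ∈ R.carrier := ⟨hQR, hv⟩
  have h2 : Disjoint P.carrier R.carrier ∧ u ∈ R.carrier := ⟨hPR, hu⟩
  have e1 : FinPoset.graft Q R v = Q.graftAux R v hQR hv := by
    rw [FinPoset.graft, dif_pos h1]
  have e2 : FinPoset.graft P R u = P.graftAux R u hPR hu := by
    rw [FinPoset.graft, dif_pos h2]
  rw [e1, e2]
  have hc1 : Disjoint P.carrier (Q.graftAux R v hQR hv).carrier ∧
      u ∈ (Q.graftAux R v hQR hv).carrier := by
    constructor
    · simpa [FinPoset.graftAux, Finset.disjoint_union_right] using ⟨hPQ, hPR⟩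
    · simp [FinPoset.graftAux, hu]
  have hc2 : Disjoint Q.carrier (P.graftAux R u hPR hu).carrier ∧
      v ∈ (P.graftAux R u hPR hu).carrier := by
    constructor
    · simpa [FinPoset.graftAux, Finset.disjoint_union_right] using ⟨hPQ.symm, hQR⟩
    · simp [FinPoset.graftAux, hv]
  rw [show FinPoset.graft P (Q.graftAux R v hQR hv) u
        = P.graftAux (Q.graftAux R v hQR hv) u hc1.1 hc1.2 by
      rw [FinPoset.graft, dif_pos hc1],
    show FinPoset.graft Q (P.graftAux R u hPR hu) v
        = Q.graftAux (P.graftAux R u hPR hu) v hc2.1 hc2.2 by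
      rw [FinPoset.graft, dif_pos hc2]]
  apply FinPoset.ext'
  · simp only [FinPoset.graftAux]
    ext x
    simp only [Finset.mem_union]
    tauto
  · funext x y
    simp only [FinPoset.graftAux]
    apply propext
    have hQu : ¬ Q.le x u := fun h =>
      Finset.disjoint_right.1 hQR hu (Q.mem_of_le h).2
    have hPv : ¬ P.le x v := fun h =>
      Finset.disjoint_right.1 hPR hv (P.mem_of_le h).2
    have huQ : u ∉ Q.carrier := Finset.disjoint_right.1 hQR hu
    have hvP : v ∉ P.carrier := Finset.disjoint_right.1 hPR hv
    tauto

/-- The left NAP identity `P ▷ (Q ▷ R) = Q ▷ (P ▷ R)` for the product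
`P ▷ Q = Σ_{v ∈ min(Q)} P ↘_v Q`, in the explicit form
`Σ_{u,v ∈ min(R)} P ↘_u (Q ↘_v R) = Σ_{u,v ∈ min(R)} Q ↘_u (P ↘_v R)`, as an identity in
the rational vector space with basis the finite posets. -/
theorem nap_identity {α : Type*} [DecidableEq α] (P Q R : FinPoset α)
    (hP : P.Connected) (hQ : Q.Connected) (hR : R.Connected)
    (hPQ : Disjoint P.carrier Q.carrier) (hPR : Disjoint P.carrier R.carrier)
    (hQR : Disjoint Q.carrier R.carrier) :
    (∑ u ∈ R.minSet, ∑ v ∈ R.minSet,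
        Finsupp.single (FinPoset.graft P (FinPoset.graft Q R v) u) (1 : ℚ))
      = ∑ u ∈ R.minSet, ∑ v ∈ R.minSet,
        Finsupp.single (FinPoset.graft Q (FinPoset.graft P R v) u) (1 : ℚ) := by
  rw [Finset.sum_comm]
  refine Finset.sum_congr rfl fun v hv => Finset.sum_congr rfl fun u hu => ?_
  have hu' : u ∈ R.carrier := Finset.mem_filter.1 hu |>.1
  have hv' : v ∈ R.carrier := Finset.mem_filter.1 hv |>.1
  rw [FinPoset.graft_swap P Q R hPQ hPR hQR hu' hv']
end

section
/- Let P and Q be finite connected posets on disjoint sets X₁ and X₂ and let v ∈ min(Q). Then { I ⊆ X₁ ⊔ X₂ : I ◎ (P ↘_v Q) } = { X₁ } ∪ { I ⊆ X₂ : I ◎ Q }. -/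
open scoped Classical

/-! In `P ↘_v Q` every element of `P` lies strictly above `v`, and an element of `Q` lies below
an element of `P` only if it lies below `v`, i.e. (by minimality) only if it is `v` itself.
Hence the minimal elements are those of `Q`, and a subset of `Q` has the same `I_-` and the same
connected components in both posets. On the other side, `P` is a connected component of the
strict up-set of `v` (no element of `Q` above `v` is comparable with `P`), and a component
meeting `P` has `I_- = {v}`, so it is `P` itself. -/

namespace FinPoset

section Order

variable {α : Type*} {P P' : FinPoset α} {S I J : Set α}

theorem mem_minSet {x : α} : x ∈ P.minSet ↔ x ∈ P.carrier ∧ ∀ y, P.le y x → y = x :=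
  Finset.mem_filter

theorem ConnOn.mono (h : P.ConnOn S) (hle : ∀ a ∈ S, ∀ b ∈ S, P.le a b → P'.le a b) :
    P'.ConnOn S := fun x hx y hy =>
  Relation.ReflTransGen.mono (fun a b ⟨ha, hb, hab⟩ =>
    ⟨ha, hb, hab.imp (hle a ha b hb) (hle b hb a ha)⟩) x y (h x hx y hy)

theorem IsCC.subset_of_mem (hI : P.IsCC S I) (hJ : P.IsCC S J) {a : α} (haI : a ∈ I)
    (haJ : a ∈ J) : I ⊆ J := by
  intro x hx
  induction hI.2.2.1 a haI x hx with
  | refl => exact haJ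
  | tail _ hbc ih => exact hJ.2.2.2 _ (ih hbc.1) _ (hI.2.1 hbc.2.1) hbc.2.2

theorem IsCC.eq_of_mem (hI : P.IsCC S I) (hJ : P.IsCC S J) {a : α} (haI : a ∈ I)
    (haJ : a ∈ J) : I = J :=
  (hI.subset_of_mem hJ haI haJ).antisymm (hJ.subset_of_mem hI haJ haI)

end Order

section Graft

variable {α : Type*} [DecidableEq α] {P Q : FinPoset α} {v : α}
  (hd : Disjoint P.carrier Q.carrier) (hvQ : v ∈ Q.carrier)

@[simp]
theorem graftAux_carrier : (P.graftAux Q v hd hvQ).carrier = P.carrier ∪ Q.carrier := rfl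

theorem graftAux_le_iff_of_mem_left {x y : α} (hx : x ∈ P.carrier) :
    (P.graftAux Q v hd hvQ).le x y ↔ P.le x y := by
  refine ⟨?_, Or.inl⟩
  rintro (h | h | ⟨h, -⟩)
  · exact h
  all_goals exact absurd hx (Finset.disjoint_right.1 hd (Q.mem_of_le h).1)

theorem graftAux_le_iff_of_mem_right {x y : α} (hy : y ∈ Q.carrier) :
    (P.graftAux Q v hd hvQ).le x y ↔ Q.le x y := by
  refine ⟨?_, fun h => Or.inr (Or.inl h)⟩
  rintro (h | h | ⟨-, hyP⟩)
  · exact absurd hy (Finset.disjoint_left.1 hd (P.mem_of_le h).2)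
  · exact h
  · exact absurd hy (Finset.disjoint_left.1 hd hyP)

theorem graftAux_le_iff_of_mem_of_mem {x y : α} (hx : x ∈ Q.carrier) (hy : y ∈ P.carrier) :
    (P.graftAux Q v hd hvQ).le x y ↔ Q.le x v := by
  refine ⟨?_, fun h => Or.inr (Or.inr ⟨h, hy⟩)⟩
  rintro (h | h | ⟨h, -⟩)
  · exact absurd hx (Finset.disjoint_left.1 hd (P.mem_of_le h).1)
  · exact absurd (Q.mem_of_le h).2 (Finset.disjoint_left.1 hd hy)
  · exact h

theorem minSet_graftAux : (P.graftAux Q v hd hvQ).minSet = Q.minSet := by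
  ext x
  simp only [mem_minSet, graftAux_carrier, Finset.mem_union]
  constructor
  · rintro ⟨hx, hmin⟩
    have hxQ : x ∈ Q.carrier := hx.resolve_left fun hxP =>
      Finset.disjoint_right.1 hd hvQ <|
        hmin v ((graftAux_le_iff_of_mem_of_mem hd hvQ hvQ hxP).2 (Q.le_refl v hvQ)) ▸ hxP
    exact ⟨hxQ, fun y hy => hmin y ((graftAux_le_iff_of_mem_right hd hvQ hxQ).2 hy)⟩
  · rintro ⟨hxQ, hmin⟩
    exact ⟨Or.inr hxQ, fun y hy => hmin y ((graftAux_le_iff_of_mem_right hd hvQ hxQ).1 hy)⟩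

theorem below_graftAux_of_subset_right {I : Finset α} (hI : I ⊆ Q.carrier) :
    (P.graftAux Q v hd hvQ).below I = Q.below I := by
  ext x
  simp only [below, Finset.mem_filter, Finset.mem_sdiff, graftAux_carrier, Finset.mem_union]
  constructor
  · rintro ⟨⟨-, hxI⟩, y, hyI, hxy⟩
    have hxy := (graftAux_le_iff_of_mem_right hd hvQ (hI hyI)).1 hxy
    exact ⟨⟨(Q.mem_of_le hxy).1, hxI⟩, y, hyI, hxy⟩
  · rintro ⟨⟨hxQ, hxI⟩, y, hyI, hxy⟩
    exact ⟨⟨Or.inr hxQ, hxI⟩, y, hyI, Or.inr (Or.inl hxy)⟩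

theorem isCC_graftAux_iff_of_subset_right (hv : v ∈ Q.minSet) {w : α} {I : Finset α}
    (hI : I ⊆ Q.carrier) :
    (P.graftAux Q v hd hvQ).IsCC {x | x ∈ (P.graftAux Q v hd hvQ).carrier ∧
        (P.graftAux Q v hd hvQ).lt w x} ↑I ↔
      Q.IsCC {x | x ∈ Q.carrier ∧ Q.lt w x} ↑I := by
  have hlt : ∀ x ∈ Q.carrier, (P.graftAux Q v hd hvQ).lt w x ↔ Q.lt w x := fun x hx =>
    and_congr_left' (graftAux_le_iff_of_mem_right hd hvQ hx)
  have hcomp : ∀ x ∈ Q.carrier, ∀ y ∈ Q.carrier,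
      ((P.graftAux Q v hd hvQ).le x y ∨ (P.graftAux Q v hd hvQ).le y x ↔
        Q.le x y ∨ Q.le y x) := fun x hx y hy =>
    or_congr (graftAux_le_iff_of_mem_right hd hvQ hy) (graftAux_le_iff_of_mem_right hd hvQ hx)
  constructor
  · rintro ⟨hne, hsub, hconn, hcl⟩
    refine ⟨hne, fun x hx => ⟨hI hx, (hlt x (hI hx)).1 (hsub hx).2⟩,
      hconn.mono fun a _ b hb => (graftAux_le_iff_of_mem_right hd hvQ (hI hb)).1, ?_⟩
    rintro x hx y ⟨hyQ, hwy⟩ hxy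
    exact hcl x hx y ⟨Finset.mem_union_right _ hyQ, (hlt y hyQ).2 hwy⟩ ((hcomp x (hI hx) y hyQ).2 hxy)
  · rintro ⟨hne, hsub, hconn, hcl⟩
    refine ⟨hne, fun x hx => ⟨Finset.mem_union_right _ (hI hx), (hlt x (hI hx)).2 (hsub hx).2⟩,
      hconn.mono fun a _ b hb => (graftAux_le_iff_of_mem_right hd hvQ (hI hb)).2, ?_⟩
    rintro x hx y ⟨hy, hwy⟩ hxy
    rcases Finset.mem_union.1 hy with hyP | hyQ
    · exfalso
      have hxQ := hI hx
      rcases hxy with hxy | hyx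
      · -- `x ≤ v` forces `x = v`, and then `w < x` contradicts the minimality of `v`
        have hxv := (mem_minSet.1 hv).2 x ((graftAux_le_iff_of_mem_of_mem hd hvQ hxQ hyP).1 hxy)
        obtain ⟨hwx, hne⟩ := (hsub hx).2
        rw [hxv] at hwx hne
        exact hne ((mem_minSet.1 hv).2 w hwx)
      · exact Finset.disjoint_left.1 hd
          (P.mem_of_le ((graftAux_le_iff_of_mem_left hd hvQ hyP).1 hyx)).2 hxQ
    · exact hcl x hx y ⟨hyQ, (hlt y hyQ).1 hwy⟩ ((hcomp x (hI hx) y hyQ).1 hxy)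

theorem circ_graftAux_iff_of_subset_right (hv : v ∈ Q.minSet) {I : Finset α}
    (hI : I ⊆ Q.carrier) : (P.graftAux Q v hd hvQ).Circ I ↔ Q.Circ I := by
  simp only [Circ, below_graftAux_of_subset_right hd hvQ hI, minSet_graftAux,
    isCC_graftAux_iff_of_subset_right hd hvQ hv hI]

theorem below_graftAux_carrier_left (hP : P.carrier.Nonempty) (hv : v ∈ Q.minSet) :
    (P.graftAux Q v hd hvQ).below P.carrier = {v} := by
  obtain ⟨p, hp⟩ := hP
  ext x
  simp only [below, Finset.mem_filter, Finset.mem_sdiff, graftAux_carrier, Finset.mem_union,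
    Finset.mem_singleton]
  constructor
  · rintro ⟨⟨hx, hxP⟩, y, hyP, hxy⟩
    exact (mem_minSet.1 hv).2 x
      ((graftAux_le_iff_of_mem_of_mem hd hvQ (hx.resolve_left hxP) hyP).1 hxy)
  · rintro rfl
    exact ⟨⟨Or.inr hvQ, Finset.disjoint_right.1 hd hvQ⟩, p, hp,
      (graftAux_le_iff_of_mem_of_mem hd hvQ hvQ hp).2 (Q.le_refl x hvQ)⟩

theorem isCC_graftAux_carrier_left (hP : P.Connected) (hv : v ∈ Q.minSet) :
    (P.graftAux Q v hd hvQ).IsCC {x | x ∈ (P.graftAux Q v hd hvQ).carrier ∧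
      (P.graftAux Q v hd hvQ).lt v x} ↑P.carrier := by
  refine ⟨hP.1, fun x hx => ?_,
    hP.2.mono fun a ha b _ => (graftAux_le_iff_of_mem_left hd hvQ ha).2, ?_⟩
  · exact ⟨Finset.mem_union_left _ hx,
      (graftAux_le_iff_of_mem_of_mem hd hvQ hvQ hx).2 (Q.le_refl v hvQ),
      fun h => Finset.disjoint_left.1 hd hx (h ▸ hvQ)⟩
  · rintro x hxP y ⟨hy, -, hne⟩ hxy
    refine (Finset.mem_union.1 hy).resolve_right fun hyQ => ?_
    rcases hxy with hxy | hyx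
    · exact Finset.disjoint_left.1 hd
        (P.mem_of_le ((graftAux_le_iff_of_mem_left hd hvQ hxP).1 hxy)).2 hyQ
    · exact hne ((mem_minSet.1 hv).2 y
        ((graftAux_le_iff_of_mem_of_mem hd hvQ hyQ hxP).1 hyx)).symm

theorem circ_graftAux_carrier_left (hP : P.Connected) (hv : v ∈ Q.minSet) :
    (P.graftAux Q v hd hvQ).Circ P.carrier :=
  ⟨v, below_graftAux_carrier_left hd hvQ hP.1 hv, (minSet_graftAux hd hvQ).symm ▸ hv,
    isCC_graftAux_carrier_left hd hvQ hP hv⟩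

theorem eq_carrier_left_of_circ_graftAux (hP : P.Connected) (hv : v ∈ Q.minSet)
    {I : Finset α} (hI : (P.graftAux Q v hd hvQ).Circ I) {p : α} (hpI : p ∈ I)
    (hpP : p ∈ P.carrier) : I = P.carrier := by
  obtain ⟨w, -, hw, hcc⟩ := hI
  rw [minSet_graftAux] at hw
  have hwv : w = v := (mem_minSet.1 hv).2 w
    ((graftAux_le_iff_of_mem_of_mem hd hvQ (mem_minSet.1 hw).1 hpP).1 (hcc.2.1 hpI).2.1)
  rw [hwv] at hcc
  exact Finset.coe_inj.1 (hcc.eq_of_mem (isCC_graftAux_carrier_left hd hvQ hP hv) hpI hpP)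

theorem circSet_graftAux (hP : P.Connected) (hv : v ∈ Q.minSet) :
    (P.graftAux Q v hd hvQ).circSet = insert P.carrier Q.circSet := by
  ext I
  simp only [circSet, Finset.mem_insert, Finset.mem_filter, Finset.mem_powerset,
    graftAux_carrier]
  constructor
  · rintro ⟨hIsub, hI⟩
    by_cases hIQ : I ⊆ Q.carrier
    · exact Or.inr ⟨hIQ, (circ_graftAux_iff_of_subset_right hd hvQ hv hIQ).1 hI⟩
    · obtain ⟨p, hpI, hpQ⟩ := Finset.not_subset.1 hIQ
      exact Or.inl (eq_carrier_left_of_circ_graftAux hd hvQ hP hv hI hpI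
        ((Finset.mem_union.1 (hIsub hpI)).resolve_right hpQ))
  · rintro (rfl | ⟨hIQ, hI⟩)
    · exact ⟨Finset.subset_union_left, circ_graftAux_carrier_left hd hvQ hP hv⟩
    · exact ⟨hIQ.trans Finset.subset_union_right,
        (circ_graftAux_iff_of_subset_right hd hvQ hv hIQ).2 hI⟩

end Graft

end FinPoset

theorem circSet_graft_min_general {α : Type*} [DecidableEq α] (P Q : FinPoset α)
    (hP : P.Connected) (hd : Disjoint P.carrier Q.carrier)
    (v : α) (hv : v ∈ Q.minSet) :
    (FinPoset.graft P Q v).circSet = insert P.carrier Q.circSet := by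
  have hvQ : v ∈ Q.carrier := (FinPoset.mem_minSet.1 hv).1
  rw [FinPoset.graft, dif_pos ⟨hd, hvQ⟩]
  exact FinPoset.circSet_graftAux hd hvQ hP hv

/-- For finite connected posets `P`, `Q` on disjoint sets and
`v ∈ min(Q)`, the subsets `I` with `I ◎ (P ↘_v Q)` are exactly `X₁` together with the
subsets `I ⊆ X₂` with `I ◎ Q`. -/
theorem circSet_graft_min {α : Type*} [DecidableEq α] (P Q : FinPoset α)
    (hP : P.Connected) (hQ : Q.Connected) (hd : Disjoint P.carrier Q.carrier)
    (v : α) (hv : v ∈ Q.minSet) :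
    (FinPoset.graft P Q v).circSet = insert P.carrier Q.circSet :=
  circSet_graft_min_general P Q hP hd v hv
end
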